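/- arXiv:2302.05684 — 3 statements merged into one kernel-verified Lean document; each statement's English description precedes it below -/
import Mathlib

section
/- Let X ∈ ℝ^{n×d} be a real matrix, let P ∈ ℝ^{n×n} be symmetric and idempotent (an orthogonal projection matrix), and set X̂ = P X. Let β ∈ ℝ^d and ε ∈ ℝ^n, and set y = Xβ + ε. Then (Xᵀ P X)⁺ Xᵀ P y = Q β + X̂⁺ ε, where Q ∈ ℝ^{d×d} is the orthogonal projection onto the row space of X̂ (equivalently Q = (X̂ᵀX̂)⁺ X̂ᵀX̂). -/
open Matrix

/-- `Ap` is a Moore–Penrose pseudoinverse of `A`: the four Penrose equations. -/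
def IsMoorePenrose {n m : Type*} [Fintype n] [Fintype m]
    (A : Matrix n m ℝ) (Ap : Matrix m n ℝ) : Prop :=
  A * Ap * A = A ∧ Ap * A * Ap = Ap ∧ (A * Ap)ᵀ = A * Ap ∧ (Ap * A)ᵀ = Ap * A

/-- Uniqueness of the Moore–Penrose pseudoinverse. -/
lemma mp_unique {n m : ℕ} (A : Matrix (Fin n) (Fin m) ℝ)
    (B C : Matrix (Fin m) (Fin n) ℝ)
    (hB : IsMoorePenrose A B) (hC : IsMoorePenrose A C) : B = C := by
  obtain ⟨hB1, hB2, hB3, hB4⟩ := hB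
  obtain ⟨hC1, hC2, hC3, hC4⟩ := hC
  have hAt1 : Aᵀ = Aᵀ * (A * C) := by
    calc Aᵀ = (A * C * A)ᵀ := by rw [hC1]
    _ = Aᵀ * (A * C)ᵀ := by rw [Matrix.transpose_mul]
    _ = Aᵀ * (A * C) := by rw [hC3]
  have hBBtAt : B * Bᵀ * Aᵀ = B := by
    calc B * Bᵀ * Aᵀ = B * (A * B)ᵀ := by
            rw [Matrix.transpose_mul, Matrix.mul_assoc]
    _ = B * (A * B) := by rw [hB3]
    _ = B := by rw [← Matrix.mul_assoc, hB2]
  have hBAC : B = B * A * C := by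
    calc B = B * Bᵀ * Aᵀ := hBBtAt.symm
    _ = B * Bᵀ * (Aᵀ * (A * C)) := by rw [← hAt1]
    _ = (B * Bᵀ * Aᵀ) * (A * C) := by simp only [Matrix.mul_assoc]
    _ = B * (A * C) := by rw [hBBtAt]
    _ = B * A * C := by rw [Matrix.mul_assoc]
  have hAt2 : Aᵀ = (B * A) * Aᵀ := by
    calc Aᵀ = (A * B * A)ᵀ := by rw [hB1]
    _ = (B * A)ᵀ * Aᵀ := by
            simp only [Matrix.transpose_mul, Matrix.mul_assoc]
    _ = (B * A) * Aᵀ := by rw [hB4]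
  have hAtCtC : Aᵀ * Cᵀ * C = C := by
    calc Aᵀ * Cᵀ * C = (C * A)ᵀ * C := by rw [Matrix.transpose_mul]
    _ = (C * A) * C := by rw [hC4]
    _ = C := hC2
  have hCBAC : C = B * A * C := by
    calc C = Aᵀ * Cᵀ * C := hAtCtC.symm
    _ = ((B * A) * Aᵀ) * Cᵀ * C := by rw [← hAt2]
    _ = (B * A) * (Aᵀ * Cᵀ * C) := by simp only [Matrix.mul_assoc]
    _ = (B * A) * C := by rw [hAtCtC]
    _ = B * A * C := rfl
  rw [hBAC, ← hCBAC]

/-- Key fact: if `G` is a pseudoinverse of `AᵀA`, then `A * (G * (AᵀA)) = A`. -/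
lemma key_fact {n m : ℕ} (A : Matrix (Fin n) (Fin m) ℝ)
    (G : Matrix (Fin m) (Fin m) ℝ) (hG : IsMoorePenrose (Aᵀ * A) G) :
    A * (G * (Aᵀ * A)) = A := by
  obtain ⟨hG1, hG2, hG3, hG4⟩ := hG
  set M := Aᵀ * A with hM
  set N : Matrix (Fin n) (Fin m) ℝ := A * (G * M) - A with hN
  have hNtN : Nᵀ * N = 0 := by
    have hNt : Nᵀ = (G * M) * Aᵀ - Aᵀ := by
      rw [hN, Matrix.transpose_sub, Matrix.transpose_mul, hG4]
    have hMGM : M * (G * M) = M := by rw [← Matrix.mul_assoc, hG1]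
    calc Nᵀ * N = ((G * M) * Aᵀ - Aᵀ) * (A * (G * M) - A) := by rw [hNt, hN]
    _ = (G * M) * (Aᵀ * (A * (G * M))) - (G * M) * (Aᵀ * A)
            - Aᵀ * (A * (G * M)) + Aᵀ * A := by
            rw [Matrix.sub_mul, Matrix.mul_sub, Matrix.mul_sub]
            simp only [Matrix.mul_assoc]
            abel
    _ = (G * M) * M - (G * M) * M - M + M := by
            rw [← Matrix.mul_assoc Aᵀ A (G * M), ← hM, hMGM]
    _ = 0 := by abel
  have hH : Nᴴ = Nᵀ := by ext i j; simp [conjTranspose_apply]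
  have hN0 : N = 0 := by
    rw [← Matrix.conjTranspose_mul_self_eq_zero (A := N), hH, hNtN]
  rw [hN] at hN0
  exact sub_eq_zero.mp hN0

/-- A pseudoinverse of a symmetric matrix is symmetric. -/
lemma mp_symm {m : ℕ} (M G : Matrix (Fin m) (Fin m) ℝ)
    (hM : Mᵀ = M) (hG : IsMoorePenrose M G) : Gᵀ = G := by
  obtain ⟨hG1, hG2, hG3, hG4⟩ := hG
  refine mp_unique M Gᵀ G ⟨?_, ?_, ?_, ?_⟩ ⟨hG1, hG2, hG3, hG4⟩
  · calc M * Gᵀ * M = (Mᵀ * (G * Mᵀ))ᵀ := by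
            simp only [Matrix.transpose_mul, Matrix.transpose_transpose, Matrix.mul_assoc]
    _ = (M * G * M)ᵀ := by rw [hM, Matrix.mul_assoc]
    _ = Mᵀ := by rw [hG1]
    _ = M := hM
  · calc Gᵀ * M * Gᵀ = (G * (Mᵀ * G))ᵀ := by
            simp only [Matrix.transpose_mul, Matrix.transpose_transpose, Matrix.mul_assoc]
    _ = (G * M * G)ᵀ := by rw [hM, Matrix.mul_assoc]
    _ = Gᵀ := by rw [hG2]
  · calc (M * Gᵀ)ᵀ = G * Mᵀ := by rw [Matrix.transpose_mul, Matrix.transpose_transpose]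
    _ = G * M := by rw [hM]
    _ = (G * M)ᵀ := hG4.symm
    _ = Mᵀ * Gᵀ := by rw [Matrix.transpose_mul]
    _ = M * Gᵀ := by rw [hM]
  · calc (Gᵀ * M)ᵀ = Mᵀ * G := by rw [Matrix.transpose_mul, Matrix.transpose_transpose]
    _ = M * G := by rw [hM]
    _ = (M * G)ᵀ := hG3.symm
    _ = Gᵀ * Mᵀ := by rw [Matrix.transpose_mul]
    _ = Gᵀ * M := by rw [hM]

/-- Two symmetric idempotent matrices with the same range coincide. -/
lemma proj_unique {m : ℕ} (P₁ P₂ : Matrix (Fin m) (Fin m) ℝ)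
    (h1s : P₁ᵀ = P₁) (h1i : P₁ * P₁ = P₁) (h2s : P₂ᵀ = P₂) (h2i : P₂ * P₂ = P₂)
    (hr : LinearMap.range P₁.mulVecLin = LinearMap.range P₂.mulVecLin) : P₁ = P₂ := by
  have key : ∀ (A B : Matrix (Fin m) (Fin m) ℝ), A * A = A →
      LinearMap.range B.mulVecLin ≤ LinearMap.range A.mulVecLin → A * B = B := by
    intro A B hAi hle
    have hv : ∀ v, (A * B).mulVec v = B.mulVec v := by
      intro v
      have : B.mulVec v ∈ LinearMap.range A.mulVecLin :=
            hle ⟨v, rfl⟩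
      obtain ⟨w, hw⟩ := this
      simp only [Matrix.mulVecLin_apply] at hw
      rw [← Matrix.mulVec_mulVec, ← hw, Matrix.mulVec_mulVec, hAi]
    apply Matrix.toLin'.injective
    exact LinearMap.ext fun v => by simpa [Matrix.toLin'_apply] using hv v
  have h12 : P₁ * P₂ = P₂ := key P₁ P₂ h1i (le_of_eq hr.symm)
  have h21 : P₂ * P₁ = P₁ := key P₂ P₁ h2i (le_of_eq hr)
  calc P₁ = P₁ᵀ := h1s.symm
  _ = (P₂ * P₁)ᵀ := by rw [h21]
  _ = P₁ᵀ * P₂ᵀ := by rw [Matrix.transpose_mul]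
  _ = P₁ * P₂ := by rw [h1s, h2s]
  _ = P₂ := h12

/-- Finite-sample decomposition of the underspecified 2SLS estimator.  For `X ∈ ℝ^{n×d}`,
a symmetric idempotent `P ∈ ℝ^{n×n}`, `X̂ = P X`, `y = Xβ + ε`, one has
`(Xᵀ P X)⁺ Xᵀ P y = Q β + X̂⁺ ε`, where `Q` is the orthogonal projection onto the row
space of `X̂` (equivalently `Q = (X̂ᵀX̂)⁺ X̂ᵀX̂`). -/
theorem stmt3 (n d : ℕ)
    (X : Matrix (Fin n) (Fin d) ℝ) (P : Matrix (Fin n) (Fin n) ℝ)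
    (hPsymm : Pᵀ = P) (hPidem : P * P = P)
    (Xhat : Matrix (Fin n) (Fin d) ℝ) (hXhat : Xhat = P * X)
    (β : Fin d → ℝ) (ε : Fin n → ℝ) (y : Fin n → ℝ)
    (hy : y = X.mulVec β + ε)
    (G : Matrix (Fin d) (Fin d) ℝ) (hG : IsMoorePenrose (Xᵀ * P * X) G)
    (Xhp : Matrix (Fin d) (Fin n) ℝ) (hXhp : IsMoorePenrose Xhat Xhp)
    (Q : Matrix (Fin d) (Fin d) ℝ)
    (hQsymm : Qᵀ = Q) (hQidem : Q * Q = Q)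
    (hQrange : LinearMap.range Q.mulVecLin = LinearMap.range Xhatᵀ.mulVecLin) :
    G.mulVec ((Xᵀ * P).mulVec y) = Q.mulVec β + Xhp.mulVec ε := by
  set A := Xhat with hA
  -- `XᵀP = Aᵀ` and `XᵀPX = AᵀA`
  have hAt : Xᵀ * P = Aᵀ := by
    rw [hXhat, Matrix.transpose_mul, hPsymm]
  have hM : Xᵀ * P * X = Aᵀ * A := by
    rw [hXhat, Matrix.transpose_mul, hPsymm, Matrix.mul_assoc, Matrix.mul_assoc,
      ← Matrix.mul_assoc P P X, hPidem]
  rw [hM] at hG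
  -- G is symmetric
  have hMsymm : (Aᵀ * A)ᵀ = Aᵀ * A := by
    rw [Matrix.transpose_mul, Matrix.transpose_transpose]
  have hGsymm : Gᵀ = G := mp_symm _ _ hMsymm hG
  obtain ⟨hG1, hG2, hG3, hG4⟩ := hG
  -- H := G * Aᵀ is a pseudoinverse of A
  have hkey : A * (G * (Aᵀ * A)) = A := key_fact A G ⟨hG1, hG2, hG3, hG4⟩
  have hH : IsMoorePenrose A (G * Aᵀ) := by
    refine ⟨?_, ?_, ?_, ?_⟩
    · calc A * (G * Aᵀ) * A = A * (G * (Aᵀ * A)) := by simp only [Matrix.mul_assoc]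
      _ = A := hkey
    · calc G * Aᵀ * A * (G * Aᵀ) = (G * (Aᵀ * A) * G) * Aᵀ := by
              simp only [Matrix.mul_assoc]
      _ = G * Aᵀ := by rw [hG2]
    · calc (A * (G * Aᵀ))ᵀ = A * Gᵀ * Aᵀ := by
              simp only [Matrix.transpose_mul, Matrix.transpose_transpose, Matrix.mul_assoc]
      _ = A * (G * Aᵀ) := by rw [hGsymm, Matrix.mul_assoc]
    · calc (G * Aᵀ * A)ᵀ = (G * (Aᵀ * A))ᵀ := by rw [Matrix.mul_assoc]
      _ = G * (Aᵀ * A) := hG4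
      _ = G * Aᵀ * A := by rw [Matrix.mul_assoc]
  -- hence Xhp = G * Aᵀ
  have hXhpEq : Xhp = G * Aᵀ := mp_unique A Xhp (G * Aᵀ) hXhp hH
  -- Xhp * A = Q
  obtain ⟨hX1, hX2, hX3, hX4⟩ := hXhp
  have hQA : Xhp * A = Q := by
    refine proj_unique (Xhp * A) Q hX4 ?_ hQsymm hQidem ?_
    · calc Xhp * A * (Xhp * A) = Xhp * (A * Xhp * A) := by simp only [Matrix.mul_assoc]
      _ = Xhp * A := by rw [hX1]
    · rw [hQrange]
      apply le_antisymm
      · -- range (Xhp * A) ≤ range Aᵀ, using Xhp * A = Aᵀ * Xhpᵀ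
        have hsym : Xhp * A = Aᵀ * Xhpᵀ := by
          rw [← hX4, Matrix.transpose_mul]
        rintro x ⟨v, rfl⟩
        refine ⟨Xhpᵀ.mulVec v, ?_⟩
        simp only [Matrix.mulVecLin_apply, Matrix.mulVec_mulVec, ← hsym]
      · -- range Aᵀ ≤ range (Xhp * A), using Aᵀ = (Xhp * A) * Aᵀ
        have hfac : Aᵀ = (Xhp * A) * Aᵀ := by
          calc Aᵀ = (A * Xhp * A)ᵀ := by rw [hX1]
          _ = Aᵀ * (A * Xhp)ᵀ := by rw [Matrix.transpose_mul]
          _ = Aᵀ * Xhpᵀ * Aᵀ := by rw [Matrix.transpose_mul, ← Matrix.mul_assoc]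
          _ = (Xhp * A) * Aᵀ := by rw [← Matrix.transpose_mul, hX4]
        rintro x ⟨v, rfl⟩
        refine ⟨Aᵀ.mulVec v, ?_⟩
        simp only [Matrix.mulVecLin_apply, Matrix.mulVec_mulVec, ← hfac]
  -- final computation
  rw [hy, hAt, hXhpEq]
  have : Aᵀ.mulVec (X.mulVec β + ε) = (Aᵀ * A).mulVec β + Aᵀ.mulVec ε := by
    rw [Matrix.mulVec_add, Matrix.mulVec_mulVec]
    congr 2
    rw [← hM, hAt]
  rw [this, Matrix.mulVec_add, Matrix.mulVec_mulVec, Matrix.mulVec_mulVec,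
    ← Matrix.mul_assoc, ← hXhpEq, hQA]
end

section
/- (Proposition 1, consistency part.) In the linear instrumental variable model, the underspecified 2SLS estimator β̂_n = (X_nᵀ P_{Z_n} X_n)⁺ X_nᵀ P_{Z_n} y_n converges in probability, as n → ∞, to P_α β, the orthogonal projection of β onto the row space of α. -/
open Matrix MeasureTheory ProbabilityTheory Filter

open scoped Topology ENNReal

/-!
Write `S_n = ZᵀZ/n`, `A_n = ZᵀX/n`, `b_n = Zᵀy/n` for the empirical moments of the first `n`
samples. Since the pseudoinverse is homogeneous of degree `-1`, the estimator equals
`F(S_n, A_n, b_n)` with `F(S, A, b) = (Aᵀ S⁺ A)⁺ Aᵀ S⁺ b`. By the strong law of large numbers,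
`(S_n, A_n, b_n) → (I, α, αβ)` almost surely. Near that point `S` and `AAᵀ` are invertible, and
there the Penrose equations identify `F(S, A, b) = Aᵀ(AAᵀ)⁻¹ b`; so `F` is continuous at the limit,
where it takes the value `αᵀ(ααᵀ)⁻¹αβ = P_α β`. Continuity at the limit turns almost sure
convergence of the (measurable) moments into convergence in probability of the estimator, without
any measurability of the pseudoinverse.
-/

namespace IsMoorePenrose

variable {m n : Type*} [Fintype m] [Fintype n]

theorem unique {A : Matrix m n ℝ} {B C : Matrix n m ℝ}
    (hB : IsMoorePenrose A B) (hC : IsMoorePenrose A C) : B = C := by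
  obtain ⟨hB₁, hB₂, hB₃, hB₄⟩ := hB
  obtain ⟨hC₁, hC₂, hC₃, hC₄⟩ := hC
  have hAB : A * B = A * C :=
    calc A * B = (A * C * A * B)ᵀ := by rw [hC₁, hB₃]
      _ = A * B * (A * C) := by rw [Matrix.mul_assoc (A * C), transpose_mul, hB₃, hC₃]
      _ = A * C := by rw [← Matrix.mul_assoc, hB₁]
  have hBA : B * A = C * A :=
    calc B * A = (B * (A * C * A))ᵀ := by rw [hC₁, hB₄]
      _ = C * A * (B * A) := by
        rw [show B * (A * C * A) = B * A * (C * A) by simp only [Matrix.mul_assoc],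
          transpose_mul, hC₄, hB₄]
      _ = C * A := by rw [Matrix.mul_assoc, ← Matrix.mul_assoc A, hB₁]
  calc B = B * A * B := hB₂.symm
    _ = C * A * C := by rw [hBA, Matrix.mul_assoc, hAB, ← Matrix.mul_assoc]
    _ = C := hC₂

theorem smul {A : Matrix m n ℝ} {B : Matrix n m ℝ} (h : IsMoorePenrose A B) {c : ℝ}
    (hc : c ≠ 0) : IsMoorePenrose (c • A) (c⁻¹ • B) := by
  obtain ⟨h₁, h₂, h₃, h₄⟩ := h
  refine ⟨?_, ?_, ?_, ?_⟩ <;>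
    simp [Matrix.smul_mul, Matrix.mul_smul, smul_smul, hc, h₁, h₂, h₃, h₄]

theorem of_isUnit_det [DecidableEq n] {A : Matrix n n ℝ} (h : IsUnit A.det) :
    IsMoorePenrose A A⁻¹ := by
  refine ⟨?_, ?_, ?_, ?_⟩ <;> simp [mul_nonsing_inv A h, nonsing_inv_mul A h]

theorem transpose_mul_mul [DecidableEq m] {A : Matrix m n ℝ} {R : Matrix n m ℝ}
    (hAR : A * R = 1) (hRA : (R * A)ᵀ = R * A) {W : Matrix m m ℝ} (hW : IsUnit W.det) :
    IsMoorePenrose (Aᵀ * W * A) (R * W⁻¹ * Rᵀ) := by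
  have hRAt : Rᵀ * Aᵀ = 1 := by rw [← transpose_mul, hAR, transpose_one]
  have hleft : Aᵀ * W * A * (R * W⁻¹ * Rᵀ) = (R * A)ᵀ := by
    simp only [Matrix.mul_assoc]
    rw [← Matrix.mul_assoc A R, hAR, Matrix.one_mul, mul_nonsing_inv_cancel_left _ _ hW,
      transpose_mul]
  have hright : R * W⁻¹ * Rᵀ * (Aᵀ * W * A) = R * A := by
    simp only [Matrix.mul_assoc]
    rw [← Matrix.mul_assoc Rᵀ, hRAt, Matrix.one_mul, nonsing_inv_mul_cancel_left _ _ hW]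
  refine ⟨?_, ?_, by rw [hleft, transpose_transpose, hRA], by rw [hright, hRA]⟩
  · rw [hleft, transpose_mul]
    simp only [Matrix.mul_assoc]
    rw [← Matrix.mul_assoc Rᵀ, hRAt, Matrix.one_mul]
  · rw [hright]
    simp only [Matrix.mul_assoc]
    rw [← Matrix.mul_assoc A R, hAR, Matrix.one_mul]

end IsMoorePenrose

namespace Matrix

variable {m n K : Type*} [Fintype m] [Fintype n] [CommRing K]

theorem eq_of_isSymm_of_isIdempotentElem_of_range_eq {P Q : Matrix n n K} (hP : P.IsSymm)
    (hP2 : IsIdempotentElem P) (hQ : Q.IsSymm) (hQ2 : IsIdempotentElem Q)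
    (h : LinearMap.range P.mulVecLin = LinearMap.range Q.mulVecLin) : P = Q := by
  have absorb : ∀ {P Q : Matrix n n K}, IsIdempotentElem Q →
      LinearMap.range P.mulVecLin ≤ LinearMap.range Q.mulVecLin → Q * P = P := by
    intro P Q hQ2 hPQ
    refine ext_iff_mulVec.2 fun v => ?_
    obtain ⟨w, hw⟩ := hPQ ⟨v, rfl⟩
    simp only [mulVecLin_apply] at hw
    rw [← mulVec_mulVec, ← hw, mulVec_mulVec, hQ2.eq]
  calc P = (Q * P)ᵀ := by rw [absorb hQ2 h.le, hP.eq]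
    _ = P * Q := by rw [transpose_mul, hP.eq, hQ.eq]
    _ = Q := absorb hP2 h.ge

variable [DecidableEq m] {A : Matrix m n K}

theorem mul_transpose_mul_nonsing_inv (hA : IsUnit (A * Aᵀ).det) : A * (Aᵀ * (A * Aᵀ)⁻¹) = 1 := by
  rw [← Matrix.mul_assoc, mul_nonsing_inv _ hA]

theorem isSymm_transpose_mul_nonsing_inv_mul : (Aᵀ * (A * Aᵀ)⁻¹ * A).IsSymm := by
  simp only [IsSymm, transpose_mul, transpose_transpose, transpose_nonsing_inv, Matrix.mul_assoc]

theorem eq_transpose_mul_nonsing_inv_mul_of_range_eq {P : Matrix n n K} (hP : P.IsSymm)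
    (hP2 : IsIdempotentElem P) (hA : IsUnit (A * Aᵀ).det)
    (h : LinearMap.range P.mulVecLin = LinearMap.range Aᵀ.mulVecLin) :
    P = Aᵀ * (A * Aᵀ)⁻¹ * A := by
  set R := Aᵀ * (A * Aᵀ)⁻¹
  have hAR : A * R = 1 := mul_transpose_mul_nonsing_inv hA
  have hRAt : R * A * Aᵀ = Aᵀ := by
    rw [← (isSymm_transpose_mul_nonsing_inv_mul (A := A)).eq, ← transpose_mul,
      ← Matrix.mul_assoc, hAR, Matrix.one_mul]
  refine eq_of_isSymm_of_isIdempotentElem_of_range_eq hP hP2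
    isSymm_transpose_mul_nonsing_inv_mul ?_ (h.trans (le_antisymm ?_ ?_))
  · rw [IsIdempotentElem, Matrix.mul_assoc, ← Matrix.mul_assoc A, hAR, Matrix.one_mul]
  · rw [← hRAt, mulVecLin_mul]
    exact LinearMap.range_comp_le_range _ _
  · rw [Matrix.mul_assoc, mulVecLin_mul]
    exact LinearMap.range_comp_le_range _ _

end Matrix

theorem Matrix.isUnit_det_mul_transpose_of_rank_eq {m n : Type*} [Fintype m] [Fintype n]
    [DecidableEq m] {A : Matrix m n ℝ} (hA : A.rank = Fintype.card m) :
    IsUnit (A * Aᵀ).det := by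
  rw [← isUnit_iff_isUnit_det, ← mulVec_surjective_iff_isUnit]
  have h : LinearMap.range (A * Aᵀ).mulVecLin = ⊤ := by
    refine Submodule.eq_top_of_finrank_eq ?_
    rw [← rank, rank_self_mul_transpose, hA, Module.finrank_fintype_fun_eq_card]
  exact LinearMap.range_eq_top.1 h

section TwoStageLeastSquares

variable {pinv : ∀ {p q : ℕ}, Matrix (Fin p) (Fin q) ℝ → Matrix (Fin q) (Fin p) ℝ} {dz dx : ℕ}

variable (pinv) in
/-- The 2SLS estimator as a function of the sample moments `M = (ZᵀZ, ZᵀX, Zᵀy)`. -/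
def twoSLS (M : Matrix (Fin dz) (Fin dz) ℝ × Matrix (Fin dz) (Fin dx) ℝ × (Fin dz → ℝ)) :
    Fin dx → ℝ :=
  pinv (M.2.1ᵀ * pinv M.1 * M.2.1) *ᵥ ((M.2.1ᵀ * pinv M.1) *ᵥ M.2.2)

theorem twoSLS_transpose_mul {n : ℕ} (Z : Matrix (Fin n) (Fin dz) ℝ)
    (X : Matrix (Fin n) (Fin dx) ℝ) (y : Fin n → ℝ) :
    pinv (Xᵀ * (Z * pinv (Zᵀ * Z) * Zᵀ) * X) *ᵥ ((Xᵀ * (Z * pinv (Zᵀ * Z) * Zᵀ)) *ᵥ y) =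
      twoSLS pinv (Zᵀ * Z, Zᵀ * X, Zᵀ *ᵥ y) := by
  have h : Xᵀ * (Z * pinv (Zᵀ * Z) * Zᵀ) = (Zᵀ * X)ᵀ * pinv (Zᵀ * Z) * Zᵀ := by
    simp only [transpose_mul, transpose_transpose, Matrix.mul_assoc]
  rw [h]
  simp only [twoSLS, Matrix.mul_assoc, mulVec_mulVec]

theorem pinv_smul (hpinv : ∀ {p q : ℕ} (A : Matrix (Fin p) (Fin q) ℝ), IsMoorePenrose A (pinv A))
    {p q : ℕ} (A : Matrix (Fin p) (Fin q) ℝ) {c : ℝ} (hc : c ≠ 0) :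
    pinv (c • A) = c⁻¹ • pinv A :=
  (hpinv _).unique ((hpinv A).smul hc)

theorem twoSLS_smul (hpinv : ∀ {p q : ℕ} (A : Matrix (Fin p) (Fin q) ℝ), IsMoorePenrose A (pinv A))
    (M : Matrix (Fin dz) (Fin dz) ℝ × Matrix (Fin dz) (Fin dx) ℝ × (Fin dz → ℝ)) {c : ℝ}
    (hc : c ≠ 0) : twoSLS pinv (c • M) = twoSLS pinv M := by
  obtain ⟨S, A, b⟩ := M
  have hAWA : (c • A)ᵀ * (c⁻¹ • pinv S) * (c • A) = c • (Aᵀ * pinv S * A) := by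
    simp [Matrix.smul_mul, Matrix.mul_smul, smul_smul, hc]
  simp only [twoSLS, Prod.smul_mk]
  rw [pinv_smul hpinv S hc, hAWA, pinv_smul hpinv _ hc]
  simp only [transpose_smul, Matrix.smul_mul, Matrix.mul_smul, smul_mulVec, mulVec_smul, smul_smul]
  rw [show c * (c⁻¹ * c) * c⁻¹ = 1 by field_simp, one_smul]

theorem twoSLS_eq_of_isUnit
    (hpinv : ∀ {p q : ℕ} (A : Matrix (Fin p) (Fin q) ℝ), IsMoorePenrose A (pinv A))
    {S : Matrix (Fin dz) (Fin dz) ℝ} {A : Matrix (Fin dz) (Fin dx) ℝ} (b : Fin dz → ℝ)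
    (hS : IsUnit S.det) (hA : IsUnit (A * Aᵀ).det) :
    twoSLS pinv (S, A, b) = (Aᵀ * (A * Aᵀ)⁻¹) *ᵥ b := by
  set R := Aᵀ * (A * Aᵀ)⁻¹
  have hAR : A * R = 1 := mul_transpose_mul_nonsing_inv hA
  have hRA : (R * A)ᵀ = R * A := isSymm_transpose_mul_nonsing_inv_mul
  have hS' : pinv S = S⁻¹ := (hpinv S).unique (.of_isUnit_det hS)
  have hAWA : pinv (Aᵀ * S⁻¹ * A) = R * S * Rᵀ := by
    simpa only [nonsing_inv_nonsing_inv _ hS] using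
      (hpinv _).unique (.transpose_mul_mul hAR hRA (isUnit_nonsing_inv_det _ hS))
  have hRAt : Rᵀ * Aᵀ = 1 := by rw [← transpose_mul, hAR, transpose_one]
  simp only [twoSLS, hS', hAWA, mulVec_mulVec]
  congr 1
  simp only [Matrix.mul_assoc]
  rw [← Matrix.mul_assoc Rᵀ, hRAt, Matrix.one_mul, mul_nonsing_inv _ hS, Matrix.mul_one]

theorem continuousAt_twoSLS
    (hpinv : ∀ {p q : ℕ} (A : Matrix (Fin p) (Fin q) ℝ), IsMoorePenrose A (pinv A))
    {S : Matrix (Fin dz) (Fin dz) ℝ} {A : Matrix (Fin dz) (Fin dx) ℝ} (b : Fin dz → ℝ)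
    (hS : IsUnit S.det) (hA : IsUnit (A * Aᵀ).det) :
    ContinuousAt (twoSLS pinv) (S, A, b) := by
  have hinv : ContinuousAt (fun M : Matrix (Fin dz) (Fin dz) ℝ × Matrix (Fin dz) (Fin dx) ℝ ×
      (Fin dz → ℝ) => (M.2.1 * M.2.1ᵀ)⁻¹) (S, A, b) :=
    (continuousAt_matrix_inv _ (NormedRing.inverse_continuousAt hA.unit)).comp
      (f := fun M : Matrix (Fin dz) (Fin dz) ℝ × Matrix (Fin dz) (Fin dx) ℝ × (Fin dz → ℝ) =>
        M.2.1 * M.2.1ᵀ) (by fun_prop)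
  have hcont : ContinuousAt (fun M : Matrix (Fin dz) (Fin dz) ℝ × Matrix (Fin dz) (Fin dx) ℝ ×
      (Fin dz → ℝ) => (M.2.1ᵀ * (M.2.1 * M.2.1ᵀ)⁻¹) *ᵥ M.2.2) (S, A, b) := by
    fun_prop
  have hdetS : ∀ᶠ M in 𝓝 (S, A, b), M.1.det ≠ 0 :=
    ((continuous_id.matrix_det).comp continuous_fst).continuousAt.eventually_ne hS.ne_zero
  have hdetA : ∀ᶠ M in 𝓝 (S, A, b), (M.2.1 * M.2.1ᵀ).det ≠ 0 := by
    refine ContinuousAt.eventually_ne ?_ hA.ne_zero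
    fun_prop
  refine hcont.congr ?_
  filter_upwards [hdetS, hdetA] with M hM₁ hM₂
  exact (twoSLS_eq_of_isUnit hpinv M.2.2 hM₁.isUnit hM₂.isUnit).symm

end TwoStageLeastSquares

instance Matrix.instMeasurableSpace {m n R : Type*} [MeasurableSpace R] :
    MeasurableSpace (Matrix m n R) :=
  inferInstanceAs (MeasurableSpace (m → n → R))

instance Matrix.instSecondCountableTopology {m n : Type*} [Countable m] [Countable n] :
    SecondCountableTopology (Matrix m n ℝ) :=
  inferInstanceAs (SecondCountableTopology (m → n → ℝ))

instance Matrix.instBorelSpace {m n : Type*} [Countable m] [Countable n] :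
    BorelSpace (Matrix m n ℝ) :=
  inferInstanceAs (BorelSpace (m → n → ℝ))

section ConvergenceInMeasure

variable {Ω : Type*} [MeasurableSpace Ω] {μ : Measure Ω} [IsFiniteMeasure μ]

theorem tendsto_measure_compl_of_ae_eventually_mem {s : ℕ → Set Ω}
    (hs : ∀ n, MeasurableSet (s n)) (h : ∀ᵐ ω ∂μ, ∀ᶠ n in atTop, ω ∈ s n) :
    Tendsto (fun n => μ (s n)ᶜ) atTop (𝓝 0) := by
  set t : ℕ → Set Ω := fun n => ⋃ k ≥ n, (s k)ᶜ
  have ht : Tendsto (μ ∘ t) atTop (𝓝 (μ (⋂ n, t n))) :=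
    tendsto_measure_iInter_atTop (fun n =>
        (MeasurableSet.biUnion (Set.to_countable _) fun k _ => (hs k).compl).nullMeasurableSet)
      (fun n n' hnn' => Set.biUnion_mono (fun k hk => le_trans hnn' hk) fun _ _ => le_rfl)
      ⟨0, measure_ne_top _ _⟩
  have hnull : μ (⋂ n, t n) = 0 := by
    refine measure_mono_null (fun ω hω => ?_) (ae_iff.1 h)
    simp only [t, Set.mem_iInter, Set.mem_iUnion, Set.mem_compl_iff] at hω
    exact not_eventually.2 (frequently_atTop.2 fun n => by simpa using hω n)
  rw [hnull] at ht
  exact tendsto_of_tendsto_of_tendsto_of_le_of_le tendsto_const_nhds ht (fun _ => zero_le)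
    fun n => measure_mono (Set.subset_iUnion₂_of_subset n le_rfl subset_rfl)

theorem tendstoInMeasure_comp_of_ae_tendsto {X E : Type*} [TopologicalSpace X]
    [MeasurableSpace X] [OpensMeasurableSpace X] [PseudoEMetricSpace E] {M : ℕ → Ω → X} {c : X}
    (hM : ∀ n, Measurable (M n)) (hlim : ∀ᵐ ω ∂μ, Tendsto (fun n => M n ω) atTop (𝓝 c))
    {F : X → E} (hF : ContinuousAt F c) :
    TendstoInMeasure μ (fun n ω => F (M n ω)) atTop (fun _ => F c) := by
  intro ε hε
  obtain ⟨V, hVF, hVo, hcV⟩ := mem_nhds_iff.1 (hF (Metric.eball_mem_nhds (F c) hε))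
  have hV : Tendsto (fun n => μ (M n ⁻¹' V)ᶜ) atTop (𝓝 0) :=
    tendsto_measure_compl_of_ae_eventually_mem (fun n => hM n hVo.measurableSet)
      (hlim.mono fun ω hω => hω (hVo.mem_nhds hcV))
  refine tendsto_of_tendsto_of_tendsto_of_le_of_le tendsto_const_nhds hV (fun _ => zero_le)
    fun n => measure_mono fun ω hω hωV => ?_
  exact not_lt.2 hω (Metric.mem_eball.1 (hVF hωV))

end ConvergenceInMeasure

noncomputable def rademacher : Measure ℝ :=
  (2⁻¹ : ℝ≥0∞) • Measure.dirac 1 + (2⁻¹ : ℝ≥0∞) • Measure.dirac (-1)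

section Rademacher

variable {Ω : Type*} [MeasurableSpace Ω] {μ : Measure Ω} {f : Ω → ℝ}

theorem ae_abs_eq_one_of_map_eq_rademacher (hf : Measurable f) (h : μ.map f = rademacher) :
    ∀ᵐ ω ∂μ, |f ω| = 1 := by
  have hs : MeasurableSet {x : ℝ | |x| = 1} := measurableSet_eq_fun measurable_abs measurable_const
  refine ae_of_ae_map (p := fun x => |x| = 1) hf.aemeasurable ?_
  rw [h, rademacher, ae_add_measure_iff]
  constructor <;> refine Measure.ae_smul_measure ?_ _ <;> rw [ae_dirac_iff hs] <;> norm_num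

theorem integrable_of_map_eq_rademacher [IsFiniteMeasure μ] (hf : Measurable f)
    (h : μ.map f = rademacher) : Integrable f μ :=
  .of_bound hf.aestronglyMeasurable 1 <| (ae_abs_eq_one_of_map_eq_rademacher hf h).mono
    fun ω hω => by rw [Real.norm_eq_abs, hω]

theorem integrable_mul_of_map_eq_rademacher (hf : Measurable f) (h : μ.map f = rademacher)
    {g : Ω → ℝ} (hg : Integrable g μ) : Integrable (fun ω => f ω * g ω) μ :=
  hg.bdd_mul hf.aestronglyMeasurable <| (ae_abs_eq_one_of_map_eq_rademacher hf h).mono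
    fun ω hω => by rw [Real.norm_eq_abs, hω]

theorem integral_eq_zero_of_map_eq_rademacher (hf : Measurable f) (h : μ.map f = rademacher) :
    ∫ ω, f ω ∂μ = 0 := by
  have hdirac : ∀ a : ℝ, Integrable (fun x : ℝ => x) (Measure.dirac a) := fun a =>
    integrable_dirac (by simp)
  calc ∫ ω, f ω ∂μ = ∫ x, x ∂rademacher := by
        rw [← h, integral_map (f := fun x : ℝ => x) hf.aemeasurable aestronglyMeasurable_id]
    _ = 0 := by
        rw [rademacher, integral_add_measure ((hdirac 1).smul_measure (by norm_num))
          ((hdirac (-1)).smul_measure (by norm_num))]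
        simp

theorem integral_mul_rademacher_eq_one_apply {ι : Type*} [DecidableEq ι] [IsProbabilityMeasure μ]
    {z : Ω → ι → ℝ} (hz : ∀ i, Measurable fun ω => z ω i) (hind : iIndepFun (fun i ω => z ω i) μ)
    (hrad : ∀ i, μ.map (fun ω => z ω i) = rademacher) (i j : ι) :
    ∫ ω, z ω i * z ω j ∂μ = (1 : Matrix ι ι ℝ) i j := by
  rcases eq_or_ne i j with rfl | hij
  · have hsq : ∀ᵐ ω ∂μ, z ω i * z ω i = 1 :=
      (ae_abs_eq_one_of_map_eq_rademacher (hz i) (hrad i)).mono fun ω hω => by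
        rw [← abs_mul_abs_self, hω, one_mul]
    simp [integral_congr_ae hsq]
  · rw [(hind.indepFun hij).integral_fun_mul_eq_mul_integral (hz i).aestronglyMeasurable
      (hz j).aestronglyMeasurable, integral_eq_zero_of_map_eq_rademacher (hz i) (hrad i),
      zero_mul, one_apply_ne hij]

end Rademacher

noncomputable def empiricalMean {M : Type*} [AddCommMonoid M] [Module ℝ M] (f : ℕ → M)
    (n : ℕ) : M :=
  (n : ℝ)⁻¹ • ∑ k ∈ Finset.range n, f k

section StrongLaw

variable {Ω E : Type*} [MeasurableSpace Ω] [MeasurableSpace E] {μ : Measure Ω}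
  {T : ℕ → Ω → E}

theorem ae_tendsto_empiricalMean_comp (hT : ∀ k, Measurable (T k)) (hindep : iIndepFun T μ)
    (hident : ∀ k, μ.map (T k) = μ.map (T 0)) {φ : E → ℝ} (hφ : Measurable φ)
    (hint : Integrable (fun ω => φ (T 0 ω)) μ) :
    ∀ᵐ ω ∂μ, Tendsto (empiricalMean fun k => φ (T k ω)) atTop (𝓝 (∫ ω, φ (T 0 ω) ∂μ)) := by
  filter_upwards [strong_law_ae_real (fun k ω => φ (T k ω)) hint
    (fun i j hij => (hindep.indepFun hij).comp hφ hφ)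
    (fun k => (IdentDistrib.mk (hT k).aemeasurable (hT 0).aemeasurable (hident k)).comp hφ)]
    with ω hω
  exact hω.congr fun n => by simp [empiricalMean, div_eq_inv_mul]

theorem ae_tendsto_empiricalMean_pi {ι : Type*} [Countable ι] (hT : ∀ k, Measurable (T k))
    (hindep : iIndepFun T μ) (hident : ∀ k, μ.map (T k) = μ.map (T 0)) {φ : E → ι → ℝ}
    (hφ : ∀ i, Measurable fun e => φ e i) (hint : ∀ i, Integrable (fun ω => φ (T 0 ω) i) μ)
    {L : ι → ℝ} (hL : ∀ i, ∫ ω, φ (T 0 ω) i ∂μ = L i) :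
    ∀ᵐ ω ∂μ, Tendsto (empiricalMean fun k => φ (T k ω)) atTop (𝓝 L) := by
  filter_upwards [ae_all_iff.2 fun i =>
    ae_tendsto_empiricalMean_comp hT hindep hident (hφ i) (hint i)] with ω hω
  refine tendsto_pi_nhds.2 fun i => ?_
  rw [← hL i]
  exact (hω i).congr fun n => by simp [empiricalMean, Finset.sum_apply]

theorem ae_tendsto_empiricalMean_matrix {m p : Type*} [Countable m] [Countable p]
    (hT : ∀ k, Measurable (T k)) (hindep : iIndepFun T μ)
    (hident : ∀ k, μ.map (T k) = μ.map (T 0)) {Φ : E → Matrix m p ℝ}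
    (hΦ : ∀ i j, Measurable fun e => Φ e i j)
    (hint : ∀ i j, Integrable (fun ω => Φ (T 0 ω) i j) μ) {L : Matrix m p ℝ}
    (hL : ∀ i j, ∫ ω, Φ (T 0 ω) i j ∂μ = L i j) :
    ∀ᵐ ω ∂μ, Tendsto (empiricalMean fun k => Φ (T k ω)) atTop (𝓝 L) := by
  filter_upwards [ae_all_iff.2 fun i => ae_all_iff.2 fun j =>
    ae_tendsto_empiricalMean_comp hT hindep hident (hΦ i j) (hint i j)] with ω hω
  refine tendsto_pi_nhds.2 fun i => tendsto_pi_nhds.2 fun j => ?_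
  rw [← hL i j]
  exact (hω i j).congr fun n => by simp [empiricalMean, Matrix.sum_apply]

end StrongLaw

theorem natCast_smul_empiricalMean {M : Type*} [AddCommMonoid M] [Module ℝ M] (f : ℕ → M)
    {n : ℕ} (hn : n ≠ 0) : (n : ℝ) • empiricalMean f n = ∑ k ∈ Finset.range n, f k := by
  simp [empiricalMean, smul_smul, hn]

theorem Matrix.transpose_of_mul_of {m p : Type*} (u : ℕ → m → ℝ) (v : ℕ → p → ℝ) (n : ℕ) :
    (of fun (k : Fin n) i => u k i)ᵀ * of (fun (k : Fin n) j => v k j) =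
      ∑ k ∈ Finset.range n, vecMulVec (u k) (v k) := by
  ext i j
  simp [mul_apply, Matrix.sum_apply, vecMulVec_apply, Fin.sum_univ_eq_sum_range
    (fun k => u k i * v k j)]

theorem Matrix.transpose_of_mulVec {m : Type*} (u : ℕ → m → ℝ) (y : ℕ → ℝ) (n : ℕ) :
    (of fun (k : Fin n) i => u k i)ᵀ *ᵥ (fun k : Fin n => y k) =
      ∑ k ∈ Finset.range n, y k • u k := by
  ext i
  simp [mulVec, dotProduct, Finset.sum_apply, Fin.sum_univ_eq_sum_range (fun k => u k i * y k),
    mul_comm]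

section InstrumentalVariables

variable {Ω m p : Type*}

noncomputable def sampleMoments (Z : ℕ → Ω → m → ℝ) (X : ℕ → Ω → p → ℝ) (Y : ℕ → Ω → ℝ)
    (n : ℕ) (ω : Ω) : Matrix m m ℝ × Matrix m p ℝ × (m → ℝ) :=
  (empiricalMean (fun k => vecMulVec (Z k ω) (Z k ω)) n,
    empiricalMean (fun k => vecMulVec (Z k ω) (X k ω)) n,
    empiricalMean (fun k => Y k ω • Z k ω) n)

theorem twoSLS_sampleMoments
    {pinv : ∀ {p q : ℕ}, Matrix (Fin p) (Fin q) ℝ → Matrix (Fin q) (Fin p) ℝ}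
    (hpinv : ∀ {p q : ℕ} (A : Matrix (Fin p) (Fin q) ℝ), IsMoorePenrose A (pinv A))
    {dz dx n : ℕ} (hn : n ≠ 0) (Z : ℕ → Ω → Fin dz → ℝ) (X : ℕ → Ω → Fin dx → ℝ)
    (Y : ℕ → Ω → ℝ) (ω : Ω) :
    twoSLS pinv (sampleMoments Z X Y n ω) =
      twoSLS pinv ((of fun (k : Fin n) i => Z k ω i)ᵀ * of (fun (k : Fin n) i => Z k ω i),
        (of fun (k : Fin n) i => Z k ω i)ᵀ * of (fun (k : Fin n) j => X k ω j),
        (of fun (k : Fin n) i => Z k ω i)ᵀ *ᵥ fun k => Y k ω) := by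
  rw [← twoSLS_smul hpinv (sampleMoments Z X Y n ω) (Nat.cast_ne_zero.2 hn)]
  simp only [sampleMoments, Prod.smul_mk, natCast_smul_empiricalMean _ hn]
  exact congrArg _ (Prod.ext (transpose_of_mul_of _ _ n).symm
    (Prod.ext (transpose_of_mul_of _ _ n).symm (transpose_of_mulVec _ _ n).symm))

variable [Fintype m] [Fintype p]

theorem sampleMoments_eq {Z : ℕ → Ω → m → ℝ} {εX : ℕ → Ω → p → ℝ} {εY : ℕ → Ω → ℝ}
    {X : ℕ → Ω → p → ℝ} {Y : ℕ → Ω → ℝ} {α : Matrix m p ℝ} {β : p → ℝ}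
    (hX : ∀ k ω, X k ω = αᵀ *ᵥ Z k ω + εX k ω) (hY : ∀ k ω, Y k ω = X k ω ⬝ᵥ β + εY k ω)
    (n : ℕ) (ω : Ω) :
    let S := empiricalMean (fun k => vecMulVec (Z k ω) (Z k ω)) n
    let C := empiricalMean (fun k => vecMulVec (Z k ω) (εX k ω)) n
    sampleMoments Z X Y n ω =
      (S, S * α + C, (S * α + C) *ᵥ β + empiricalMean (fun k => εY k ω • Z k ω) n) := by
  intro S C
  have hZX : ∀ k, vecMulVec (Z k ω) (X k ω) =
      vecMulVec (Z k ω) (Z k ω) * α + vecMulVec (Z k ω) (εX k ω) := fun k => by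
    rw [hX, vecMulVec_add, mulVec_transpose, vecMulVec_mul]
  have hZY : ∀ k, Y k ω • Z k ω = vecMulVec (Z k ω) (X k ω) *ᵥ β + εY k ω • Z k ω := fun k => by
    rw [hY, add_smul, vecMulVec_mulVec, op_smul_eq_smul]
  have hA : empiricalMean (fun k => vecMulVec (Z k ω) (X k ω)) n = S * α + C := by
    simp only [S, C, empiricalMean, hZX, Finset.sum_add_distrib, smul_add, Matrix.sum_mul,
      Matrix.smul_mul]
  have hb : empiricalMean (fun k => Y k ω • Z k ω) n =
      empiricalMean (fun k => vecMulVec (Z k ω) (X k ω)) n *ᵥ β +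
        empiricalMean (fun k => εY k ω • Z k ω) n := by
    simp only [empiricalMean, hZY, Finset.sum_add_distrib, smul_add, Matrix.sum_mulVec,
      smul_mulVec]
  rw [sampleMoments, hb, hA]

variable [MeasurableSpace Ω]

theorem measurable_sampleMoments {Z : ℕ → Ω → m → ℝ}
    {X : ℕ → Ω → p → ℝ} {Y : ℕ → Ω → ℝ} (hZ : ∀ k, Measurable (Z k)) (hX : ∀ k, Measurable (X k))
    (hY : ∀ k, Measurable (Y k)) (n : ℕ) : Measurable (sampleMoments Z X Y n) := by
  have hZZ : ∀ k, Measurable fun ω => vecMulVec (Z k ω) (Z k ω) := fun k =>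
    (continuous_fst.matrix_vecMulVec continuous_snd).measurable.comp ((hZ k).prodMk (hZ k))
  have hZX : ∀ k, Measurable fun ω => vecMulVec (Z k ω) (X k ω) := fun k =>
    (continuous_fst.matrix_vecMulVec continuous_snd).measurable.comp ((hZ k).prodMk (hX k))
  unfold sampleMoments empiricalMean
  fun_prop

theorem ae_tendsto_sampleMoments [DecidableEq m] {μ : Measure Ω} [IsProbabilityMeasure μ]
    {Z : ℕ → Ω → m → ℝ} {εX : ℕ → Ω → p → ℝ} {εY : ℕ → Ω → ℝ}
    (hZ : ∀ k, Measurable (Z k)) (hεX : ∀ k, Measurable (εX k)) (hεY : ∀ k, Measurable (εY k))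
    (hindep : iIndepFun (fun k ω => (Z k ω, εX k ω, εY k ω)) μ)
    (hident : ∀ k, μ.map (fun ω => (Z k ω, εX k ω, εY k ω)) =
      μ.map (fun ω => (Z 0 ω, εX 0 ω, εY 0 ω)))
    (hZcomp : iIndepFun (fun j ω => Z 0 ω j) μ)
    (hZrad : ∀ j, μ.map (fun ω => Z 0 ω j) = rademacher)
    (hZε : IndepFun (Z 0) (fun ω => (εX 0 ω, εY 0 ω)) μ)
    (hεXmean : ∀ i, ∫ ω, εX 0 ω i ∂μ = 0) (hεYmean : ∫ ω, εY 0 ω ∂μ = 0)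
    (hεXint : ∀ i, Integrable (fun ω => εX 0 ω i) μ) (hεYint : Integrable (εY 0) μ)
    {X : ℕ → Ω → p → ℝ} {Y : ℕ → Ω → ℝ} {α : Matrix m p ℝ} {β : p → ℝ}
    (hX : ∀ k ω, X k ω = αᵀ *ᵥ Z k ω + εX k ω) (hY : ∀ k ω, Y k ω = X k ω ⬝ᵥ β + εY k ω) :
    ∀ᵐ ω ∂μ, Tendsto (fun n => sampleMoments Z X Y n ω) atTop (𝓝 (1, α, α *ᵥ β)) := by
  have hT : ∀ k, Measurable fun ω => (Z k ω, εX k ω, εY k ω) := fun k =>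
    (hZ k).prodMk ((hεX k).prodMk (hεY k))
  have hZi : ∀ i, Measurable fun ω => Z 0 ω i := fun i => (measurable_pi_apply i).comp (hZ 0)
  have hZεX : ∀ i j, IndepFun (fun ω => Z 0 ω i) (fun ω => εX 0 ω j) μ := fun i j =>
    hZε.comp (measurable_pi_apply i) ((measurable_pi_apply j).comp measurable_fst)
  have hZεY : ∀ i, IndepFun (fun ω => Z 0 ω i) (εY 0) μ := fun i =>
    hZε.comp (measurable_pi_apply i) measurable_snd
  have hS := ae_tendsto_empiricalMean_matrix hT hindep hident
    (Φ := fun t => vecMulVec t.1 t.1) (fun i j => by simp only [vecMulVec_apply]; fun_prop)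
    (fun i j => integrable_mul_of_map_eq_rademacher (hZi i) (hZrad i)
      (integrable_of_map_eq_rademacher (hZi j) (hZrad j)))
    (integral_mul_rademacher_eq_one_apply hZi hZcomp hZrad)
  have hC := ae_tendsto_empiricalMean_matrix hT hindep hident
    (Φ := fun t => vecMulVec t.1 t.2.1) (L := 0)
    (fun i j => by simp only [vecMulVec_apply]; fun_prop)
    (fun i j => integrable_mul_of_map_eq_rademacher (hZi i) (hZrad i) (hεXint j))
    (fun i j => by
      simp only [vecMulVec_apply]
      rw [(hZεX i j).integral_fun_mul_eq_mul_integral (hZi i).aestronglyMeasurable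
        (hεXint j).aestronglyMeasurable, hεXmean, mul_zero, Matrix.zero_apply])
  have hc := ae_tendsto_empiricalMean_pi hT hindep hident
    (φ := fun t => t.2.2 • t.1) (L := 0)
    (fun i => by simp only [Pi.smul_apply, smul_eq_mul]; fun_prop)
    (fun i => by
      simp only [Pi.smul_apply, smul_eq_mul, mul_comm (εY 0 _)]
      exact integrable_mul_of_map_eq_rademacher (hZi i) (hZrad i) hεYint)
    (fun i => by
      simp only [Pi.smul_apply, smul_eq_mul, mul_comm (εY 0 _)]
      rw [(hZεY i).integral_fun_mul_eq_mul_integral (hZi i).aestronglyMeasurable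
        hεYint.aestronglyMeasurable, hεYmean, mul_zero, Pi.zero_apply])
  filter_upwards [hS, hC, hc] with ω hS hC hc
  have hH : Continuous fun M : Matrix m m ℝ × Matrix m p ℝ × (m → ℝ) =>
      (M.1, M.1 * α + M.2.1, (M.1 * α + M.2.1) *ᵥ β + M.2.2) := by fun_prop
  simp only [sampleMoments_eq hX hY]
  simpa [Function.comp_def] using (hH.tendsto (1, 0, 0)).comp (hS.prodMk_nhds (hC.prodMk_nhds hc))

end InstrumentalVariables

theorem stmt4_general
    -- model dimensions and parameters
    (dz dx : ℕ)
    (α : Matrix (Fin dz) (Fin dx) ℝ) (hα : α.rank = dz)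
    (β : Fin dx → ℝ)
    -- an i.i.d. sequence of samples (Z k, εX k, εY k) on a probability space
    (Ω : Type*) [MeasurableSpace Ω] (μ : Measure Ω) [IsProbabilityMeasure μ]
    (Z : ℕ → Ω → Fin dz → ℝ) (εX : ℕ → Ω → Fin dx → ℝ) (εY : ℕ → Ω → ℝ)
    (hZmeas : ∀ k, Measurable (Z k)) (hεXmeas : ∀ k, Measurable (εX k))
    (hεYmeas : ∀ k, Measurable (εY k))
    (hiid_indep : iIndepFun
      (fun k ω => (Z k ω, εX k ω, εY k ω)) μ)
    (hiid_ident : ∀ k, Measure.map (fun ω => (Z k ω, εX k ω, εY k ω)) μ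
      = Measure.map (fun ω => (Z 0 ω, εX 0 ω, εY 0 ω)) μ)
    -- Z has i.i.d. Rademacher components
    (hZcomp_indep : ∀ k, iIndepFun (fun j ω => Z k ω j) μ)
    (hZrad : ∀ k j, Measure.map (fun ω => Z k ω j) μ
      = (2⁻¹ : ENNReal) • Measure.dirac (1 : ℝ) + (2⁻¹ : ENNReal) • Measure.dirac (-1 : ℝ))
    -- the instruments are independent of the (possibly mutually dependent) noise
    (hZε : ∀ k, IndepFun (Z k) (fun ω => (εX k ω, εY k ω)) μ)
    -- centered noise with finite second moments
    (hεXmean : ∀ k i, ∫ ω, εX k ω i ∂μ = 0)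
    (hεYmean : ∀ k, ∫ ω, εY k ω ∂μ = 0)
    (hεXL2 : ∀ k i, MemLp (fun ω => εX k ω i) 2 μ)
    (hεYL2 : ∀ k, MemLp (εY k) 2 μ)
    -- structural equations: X = αᵀ Z + εX and Y = βᵀ X + εY
    (X : ℕ → Ω → Fin dx → ℝ) (hX : ∀ k ω, X k ω = αᵀ.mulVec (Z k ω) + εX k ω)
    (Y : ℕ → Ω → ℝ) (hY : ∀ k ω, Y k ω = X k ω ⬝ᵥ β + εY k ω)
    -- a Moore–Penrose pseudoinverse operation on real matrices
    (pinv : ∀ {p q : ℕ}, Matrix (Fin p) (Fin q) ℝ → Matrix (Fin q) (Fin p) ℝ)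
    (hpinv : ∀ {p q : ℕ} (A : Matrix (Fin p) (Fin q) ℝ), IsMoorePenrose A (pinv A))
    -- the orthogonal projection onto the row space of α
    (Pα : Matrix (Fin dx) (Fin dx) ℝ) (hPαsymm : Pαᵀ = Pα) (hPαidem : Pα * Pα = Pα)
    (hPαrange : LinearMap.range Pα.mulVecLin = LinearMap.range αᵀ.mulVecLin)
    -- the underspecified 2SLS estimator built from the first n samples
    (βhat : (n : ℕ) → Ω → Fin dx → ℝ)
    (hβhat : ∀ (n : ℕ) (ω : Ω),
      βhat n ω =
        let Zn : Matrix (Fin n) (Fin dz) ℝ := Matrix.of fun i j => Z i ω j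
        let Xn : Matrix (Fin n) (Fin dx) ℝ := Matrix.of fun i j => X i ω j
        let yn : Fin n → ℝ := fun i => Y i ω
        let PZ : Matrix (Fin n) (Fin n) ℝ := Zn * pinv (Znᵀ * Zn) * Znᵀ
        (pinv (Xnᵀ * PZ * Xn)).mulVec ((Xnᵀ * PZ).mulVec yn)) :
    TendstoInMeasure μ βhat atTop (fun _ => Pα.mulVec β) := by
  have hXmeas : ∀ k, Measurable (X k) := fun k => by rw [funext (hX k)]; fun_prop
  have hYmeas : ∀ k, Measurable (Y k) := fun k => by rw [funext (hY k)]; fun_prop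
  have hαα : IsUnit (α * αᵀ).det := isUnit_det_mul_transpose_of_rank_eq (by simpa using hα)
  have hlimit : twoSLS pinv (1, α, α *ᵥ β) = Pα *ᵥ β := by
    rw [twoSLS_eq_of_isUnit hpinv _ (by simp) hαα, mulVec_mulVec,
      ← eq_transpose_mul_nonsing_inv_mul_of_range_eq hPαsymm hPαidem hαα hPαrange]
  have hβhat_eq : ∀ n ≠ 0, βhat n = fun ω => twoSLS pinv (sampleMoments Z X Y n ω) :=
    fun n hn => funext fun ω => by
      rw [hβhat, twoSLS_sampleMoments hpinv hn]
      exact twoSLS_transpose_mul _ _ _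
  refine TendstoInMeasure.congr' (f := fun n ω => twoSLS pinv (sampleMoments Z X Y n ω)) ?_
    EventuallyEq.rfl ?_
  · filter_upwards [eventually_ne_atTop 0] with n hn
    rw [hβhat_eq n hn]
  rw [← hlimit]
  refine tendstoInMeasure_comp_of_ae_tendsto (measurable_sampleMoments hZmeas hXmeas hYmeas)
    ?_ (continuousAt_twoSLS hpinv _ (by simp) hαα)
  exact ae_tendsto_sampleMoments hZmeas hεXmeas hεYmeas hiid_indep hiid_ident (hZcomp_indep 0)
    (hZrad 0) (hZε 0) (hεXmean 0) (hεYmean 0) (fun i => (hεXL2 0 i).integrable one_le_two)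
    ((hεYL2 0).integrable one_le_two) hX hY

/-- Proposition 1 (consistency part): in the underspecified linear IV model, the 2SLS
estimator `β̂_n = (Xᵀ P_Z X)⁺ Xᵀ P_Z y` converges in probability to `P_α β`, the
orthogonal projection of `β` onto the row space of `α`. -/
theorem stmt4
    -- model dimensions and parameters
    (dz dx : ℕ) (hdim : dz < dx)
    (α : Matrix (Fin dz) (Fin dx) ℝ) (hα : α.rank = dz)
    (β : Fin dx → ℝ)
    -- an i.i.d. sequence of samples (Z k, εX k, εY k) on a probability space
    (Ω : Type*) [MeasurableSpace Ω] (μ : Measure Ω) [IsProbabilityMeasure μ]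
    (Z : ℕ → Ω → Fin dz → ℝ) (εX : ℕ → Ω → Fin dx → ℝ) (εY : ℕ → Ω → ℝ)
    (hZmeas : ∀ k, Measurable (Z k)) (hεXmeas : ∀ k, Measurable (εX k))
    (hεYmeas : ∀ k, Measurable (εY k))
    (hiid_indep : iIndepFun
      (fun k ω => (Z k ω, εX k ω, εY k ω)) μ)
    (hiid_ident : ∀ k, Measure.map (fun ω => (Z k ω, εX k ω, εY k ω)) μ
      = Measure.map (fun ω => (Z 0 ω, εX 0 ω, εY 0 ω)) μ)
    -- Z has i.i.d. Rademacher components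
    (hZcomp_indep : ∀ k, iIndepFun (fun j ω => Z k ω j) μ)
    (hZrad : ∀ k j, Measure.map (fun ω => Z k ω j) μ
      = (2⁻¹ : ENNReal) • Measure.dirac (1 : ℝ) + (2⁻¹ : ENNReal) • Measure.dirac (-1 : ℝ))
    -- the instruments are independent of the (possibly mutually dependent) noise
    (hZε : ∀ k, IndepFun (Z k) (fun ω => (εX k ω, εY k ω)) μ)
    -- centered noise with finite second moments
    (hεXmean : ∀ k i, ∫ ω, εX k ω i ∂μ = 0)
    (hεYmean : ∀ k, ∫ ω, εY k ω ∂μ = 0)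
    (hεXL2 : ∀ k i, MemLp (fun ω => εX k ω i) 2 μ)
    (hεYL2 : ∀ k, MemLp (εY k) 2 μ)
    -- structural equations: X = αᵀ Z + εX and Y = βᵀ X + εY
    (X : ℕ → Ω → Fin dx → ℝ) (hX : ∀ k ω, X k ω = αᵀ.mulVec (Z k ω) + εX k ω)
    (Y : ℕ → Ω → ℝ) (hY : ∀ k ω, Y k ω = X k ω ⬝ᵥ β + εY k ω)
    -- a Moore–Penrose pseudoinverse operation on real matrices
    (pinv : ∀ {p q : ℕ}, Matrix (Fin p) (Fin q) ℝ → Matrix (Fin q) (Fin p) ℝ)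
    (hpinv : ∀ {p q : ℕ} (A : Matrix (Fin p) (Fin q) ℝ), IsMoorePenrose A (pinv A))
    -- the orthogonal projection onto the row space of α
    (Pα : Matrix (Fin dx) (Fin dx) ℝ) (hPαsymm : Pαᵀ = Pα) (hPαidem : Pα * Pα = Pα)
    (hPαrange : LinearMap.range Pα.mulVecLin = LinearMap.range αᵀ.mulVecLin)
    -- the underspecified 2SLS estimator built from the first n samples
    (βhat : (n : ℕ) → Ω → Fin dx → ℝ)
    (hβhat : ∀ (n : ℕ) (ω : Ω),
      βhat n ω =
        let Zn : Matrix (Fin n) (Fin dz) ℝ := Matrix.of fun i j => Z i ω j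
        let Xn : Matrix (Fin n) (Fin dx) ℝ := Matrix.of fun i j => X i ω j
        let yn : Fin n → ℝ := fun i => Y i ω
        let PZ : Matrix (Fin n) (Fin n) ℝ := Zn * pinv (Znᵀ * Zn) * Znᵀ
        (pinv (Xnᵀ * PZ * Xn)).mulVec ((Xnᵀ * PZ).mulVec yn)) :
    TendstoInMeasure μ βhat atTop (fun _ => Pα.mulVec β) :=
  stmt4_general dz dx α hα β Ω μ Z εX εY hZmeas hεXmeas hεYmeas hiid_indep hiid_ident hZcomp_indep
    hZrad hZε hεXmean hεYmean hεXL2 hεYL2 X hX Y hY pinv hpinv Pα hPαsymm hPαidem hPαrange βhat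
    hβhat
end

section
/- (Deterministic core of Proposition 2.) Let E be a finite-dimensional real inner product space, let W₁, …, W_T be subspaces of E with orthogonal projections P₁, …, P_T, let W = W₁ + … + W_T with orthogonal projection P_W, and let β ∈ E. Then P_W β is the unique element of minimum norm in the set {γ ∈ E : P_i γ = P_i β for all i ∈ {1, …, T}}; that is, P_W β satisfies all constraints, and every other γ satisfying all constraints has ‖γ‖ > ‖P_W β‖. -/
namespace Submodule

variable {𝕜 E : Type*} [RCLike 𝕜] [NormedAddCommGroup E] [InnerProductSpace 𝕜 E]

theorem norm_starProjection_lt {K : Submodule 𝕜 E} [K.HasOrthogonalProjection] {v : E}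
    (hv : K.starProjection v ≠ v) : ‖K.starProjection v‖ < ‖v‖ :=
  (K.norm_starProjection_apply_le v).lt_of_ne fun h ↦
    hv (starProjection_eq_self_iff.mpr ((K.mem_iff_norm_starProjection v).mpr h))

theorem sub_mem_orthogonal_iSup_of_orthogonalProjectionOnto_eq {ι : Type*}
    {W : ι → Submodule 𝕜 E} [∀ i, (W i).HasOrthogonalProjection] {γ β : E}
    (h : ∀ i, (W i).orthogonalProjectionOnto γ = (W i).orthogonalProjectionOnto β) :
    γ - β ∈ (⨆ i, W i)ᗮ := by
  rw [← iInf_orthogonal, mem_iInf]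
  intro i
  rw [← orthogonalProjectionOnto_eq_zero_iff, map_sub, h i, sub_self]

theorem starProjection_iSup_eq_of_orthogonalProjectionOnto_eq {ι : Type*}
    {W : ι → Submodule 𝕜 E} [∀ i, (W i).HasOrthogonalProjection]
    [(⨆ i, W i).HasOrthogonalProjection] {γ β : E}
    (h : ∀ i, (W i).orthogonalProjectionOnto γ = (W i).orthogonalProjectionOnto β) :
    (⨆ i, W i).starProjection γ = (⨆ i, W i).starProjection β := by
  rw [← sub_eq_zero, ← map_sub, starProjection_apply_eq_zero_iff]
  exact sub_mem_orthogonal_iSup_of_orthogonalProjectionOnto_eq h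

end Submodule

/-- Deterministic core of Proposition 2: for subspaces `W₁, …, W_T` of a finite-dimensional
real inner product space with `W = W₁ + … + W_T`, the projection `P_W β` is the unique
minimum-norm element of `{γ : P_i γ = P_i β for all i}`: it satisfies all constraints, and
any other feasible `γ` has strictly larger norm. -/
theorem stmt7 {E : Type*} [NormedAddCommGroup E] [InnerProductSpace ℝ E]
    [FiniteDimensional ℝ E] (T : ℕ) (W : Fin T → Submodule ℝ E) (β : E) :
    (∀ i : Fin T,
        Submodule.orthogonalProjectionOnto (W i) ((Submodule.orthogonalProjectionOnto (⨆ j : Fin T, W j) β : E))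
          = Submodule.orthogonalProjectionOnto (W i) β) ∧
    (∀ γ : E,
        (∀ i : Fin T, Submodule.orthogonalProjectionOnto (W i) γ = Submodule.orthogonalProjectionOnto (W i) β) →
        γ ≠ (Submodule.orthogonalProjectionOnto (⨆ j : Fin T, W j) β : E) →
        ‖(Submodule.orthogonalProjectionOnto (⨆ j : Fin T, W j) β : E)‖ < ‖γ‖) := by
  refine ⟨fun i ↦ Submodule.orthogonalProjectionOnto_starProjection_of_le (le_iSup W i) β,
    fun γ hγ hne ↦ ?_⟩
  have hproj := Submodule.starProjection_iSup_eq_of_orthogonalProjectionOnto_eq hγ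
  rw [← Submodule.starProjection_apply, ← hproj] at hne ⊢
  exact Submodule.norm_starProjection_lt (Ne.symm hne)
end
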